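/- arXiv:1604.06913 — 7 statements merged into one kernel-verified Lean document; each statement's English description precedes it below -/
import Mathlib

section
/- In a Jordan algebra A (commutative, characteristic ≠ 2), if e and f are idempotents with U_e(A) = U_f(A), then e = f, where U_a x = 2(a∘x)∘a - a²∘x. -/
/-- The quadratic `U`-operator of a (linear) Jordan algebra: `U_a x = 2 a(ax) - a² x`. -/
def Uop {A : Type*} [NonUnitalNonAssocRing A] (a x : A) : A :=
  2 • (a * (a * x)) - (a * a) * x

/-- For an idempotent `e` in a Jordan algebra, `L_e` satisfies `2L_e³ - 3L_e² + L_e = 0`. -/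
theorem Lkey_aux {F A : Type*} [Field F]
    [NonUnitalNonAssocRing A] [Module F A] (h2 : (2 : F) ≠ 0)
    (comm : ∀ a b : A, a * b = b * a)
    (jordan : ∀ a b : A, ((a * a) * b) * a = (a * a) * (b * a))
    (e : A) (he : e * e = e) (x : A) :
    e*x + 2•(e*(e*(e*x))) = 3•(e*(e*x)) := by
  have h1 := jordan (e+x) e
  have h2' := jordan (e-x) e
  have h3 := jordan x e
  simp only [mul_add, add_mul, mul_sub, sub_mul, he, comm x e, comm (e*x) e,
    comm (e*(e*x)) e, h3] at h1 h2'
  have h12 : ∀ p q r s : A, p = q → r = s → p - r = q - s := by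
    intro p q r s hpq hrs; rw [hpq, hrs]
  have key := h12 _ _ _ _ h1 h2'
  abel_nf at key
  have dbl : ∀ a b : A, a + a = b + b → a = b := by
    intro a b hab
    have hF : (2:F) • a = (2:F) • b := by rw [two_smul, two_smul]; exact hab
    exact smul_right_injective A h2 hF
  apply dbl
  rw [← add_left_inj (2•(x*x*(e*x)))]
  abel_nf
  convert key using 1; abel

/-- The range of `U_e` lies in the Peirce 1-eigenspace of `e`. -/
theorem Upeirce_aux {F A : Type*} [Field F]
    [NonUnitalNonAssocRing A] [Module F A] (h2 : (2 : F) ≠ 0)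
    (comm : ∀ a b : A, a * b = b * a)
    (jordan : ∀ a b : A, ((a * a) * b) * a = (a * a) * (b * a))
    (e : A) (he : e * e = e) (x : A) :
    e * Uop e x = Uop e x := by
  have k := Lkey_aux h2 comm jordan e he x
  unfold Uop
  rw [he]
  rw [mul_sub]
  simp only [two_smul, mul_add]
  rw [sub_eq_sub_iff_add_eq_add]
  abel_nf
  abel_nf at k
  convert k using 1; abel

theorem idempotent_eq_of_U_range_eq {F A : Type*} [Field F]
    [NonUnitalNonAssocRing A] [Module F A] (h2 : (2 : F) ≠ 0)
    (comm : ∀ a b : A, a * b = b * a)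
    (jordan : ∀ a b : A, ((a * a) * b) * a = (a * a) * (b * a))
    (e f : A) (he : e * e = e) (hf : f * f = f)
    (h : Set.range (Uop e) = Set.range (Uop f)) : e = f := by
  have hUe : Uop e e = e := by unfold Uop; rw [he, he, two_smul]; abel
  have hUf : Uop f f = f := by unfold Uop; rw [hf, hf, two_smul]; abel
  have hef : e * f = f := by
    have : f ∈ Set.range (Uop e) := by rw [h]; exact ⟨f, hUf⟩
    obtain ⟨z, hz⟩ := this
    rw [← hz]
    exact Upeirce_aux h2 comm jordan e he z
  have hfe : f * e = e := by
    have : e ∈ Set.range (Uop f) := by rw [← h]; exact ⟨e, hUe⟩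
    obtain ⟨z, hz⟩ := this
    rw [← hz]
    exact Upeirce_aux h2 comm jordan f hf z
  calc e = f * e := hfe.symm
    _ = e * f := comm f e
    _ = f := hef
end

section
/- Let A be a Jordan algebra over a field of characteristic ≠ 2 satisfying: for every x ∈ A there exists an idempotent e with {a ∈ A² : U_a x = 0} = U_e(A) ∩ A² (an RJ-algebra), where A² = {a² : a ∈ A}. Then there exists an idempotent e ∈ A with e∘a = a for every a ∈ A². -/
/-- The set of squares `A² = {a² : a ∈ A}`. -/
def sqSet (A : Type*) [NonUnitalNonAssocRing A] : Set A := {a | ∃ b, b * b = a}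

theorem RJ_has_unit_on_squares {F A : Type*} [Field F]
    [NonUnitalNonAssocRing A] [Module F A] (h2 : (2 : F) ≠ 0)
    (comm : ∀ a b : A, a * b = b * a)
    (jordan : ∀ a b : A, ((a * a) * b) * a = (a * a) * (b * a))
    (RJ : ∀ x : A, ∃ e : A, e * e = e ∧
      {a | Uop a x = 0} ∩ sqSet A = Set.range (Uop e) ∩ sqSet A) :
    ∃ e : A, e * e = e ∧ ∀ a ∈ sqSet A, e * a = a := by
  obtain ⟨e, he, hset⟩ := RJ 0
  -- the linearized Jordan identity at the idempotent `e`
  have lin : ∀ b c : A,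
      ((e*c)*b)*e + ((e*c)*b)*e + (e*b)*c + (((e*c)*b)*e + ((e*c)*b)*e + (e*b)*c)
        = (e*c)*(b*e) + (e*c)*(b*e) + e*(b*c)
            + ((e*c)*(b*e) + (e*c)*(b*e) + e*(b*c)) := by
    intro b c
    have hp := jordan (e+c) b
    have hq := jordan (e-c) b
    have hc := jordan c b
    have ce : c * e = e * c := comm c e
    simp only [mul_add, add_mul, mul_sub, sub_mul, ce, he] at hp hq
    linear_combination (norm := abel1) hp - hq - hc - hc
  -- halve it
  have lin' : ∀ b c : A,
      ((e*c)*b)*e + ((e*c)*b)*e + (e*b)*c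
        = (e*c)*(b*e) + (e*c)*(b*e) + e*(b*c) := by
    intro b c
    set X := ((e*c)*b)*e + ((e*c)*b)*e + (e*b)*c with hX
    set Y := (e*c)*(b*e) + (e*c)*(b*e) + e*(b*c) with hY
    have h : (2:F) • (X - Y) = 0 := by
      rw [two_smul]
      have hXY : X + X = Y + Y := lin b c
      have h' : X - Y + (X - Y) = X + X - (Y + Y) := by abel
      rw [h', hXY, sub_self]
    have hz : X - Y = 0 := by
      have := congrArg (fun z => (2:F)⁻¹ • z) h
      simpa [inv_smul_smul₀ h2] using this
    exact sub_eq_zero.mp hz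
  have fix : ∀ y : A, e * Uop e y = Uop e y := by
    intro y
    have h3 := lin' e y
    have eye : (e*y)*e = e*(e*y) := comm _ _
    have e3 : (e*(e*y))*e = e*(e*(e*y)) := comm _ _
    rw [he, eye, e3] at h3
    simp only [Uop, he, two_smul]
    rw [mul_sub, mul_add]
    linear_combination (norm := abel1) h3
  refine ⟨e, he, fun a ha => ?_⟩
  have hmem : a ∈ Set.range (Uop e) ∩ sqSet A := by
    rw [← hset]
    refine ⟨?_, ha⟩
    show Uop a 0 = 0
    simp [Uop]
  obtain ⟨⟨y, hy⟩, -⟩ := hmem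
  rw [← hy]
  exact fix y
end

section
/- Let A be an RJ-algebra. If a ∈ A has a square root (a = b² for some b ∈ A) and a^n = 0 for some n ≥ 1, then a = 0. -/
/-- Jordan powers: `jpow a n = a ^ (n + 1)`. -/
def jpow {A : Type*} [NonUnitalNonAssocRing A] (a : A) : ℕ → A
  | 0 => a
  | n + 1 => a * jpow a n

theorem RJ_no_nilpotent_with_square_root {F A : Type*} [Field F]
    [NonUnitalNonAssocRing A] [Module F A] (h2 : (2 : F) ≠ 0)
    (comm : ∀ a b : A, a * b = b * a)
    (jordan : ∀ a b : A, ((a * a) * b) * a = (a * a) * (b * a))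
    (RJ : ∀ x : A, ∃ e : A, e * e = e ∧
      {a | Uop a x = 0} ∩ sqSet A = Set.range (Uop e) ∩ sqSet A)
    (a b : A) (hsq : b * b = a) (n : ℕ) (hnil : jpow a n = 0) : a = 0 := by
  -- A is 2-torsion free, since it is a vector space over F with 2 ≠ 0.
  have tf : ∀ x : A, x + x = 0 → x = 0 := by
    intro x hx
    have h : (2 : F) • x = 0 := by rw [two_smul]; exact hx
    have h' := congrArg (fun z : A => (2 : F)⁻¹ • z) h
    simpa [smul_smul, inv_mul_cancel₀ h2] using h'
  -- Linearized Jordan identity (degree 1 part in `s`).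
  have lin : ∀ e s c : A,
      ((e*s)*c)*e + ((s*e)*c)*e + ((e*e)*c)*s
        = (e*s)*(c*e) + (s*e)*(c*e) + (e*e)*(c*s) := by
    intro e s c
    have h1 : (((e+s)*(e+s))*c)*(e+s) - ((e+s)*(e+s))*(c*(e+s)) = 0 :=
      sub_eq_zero_of_eq (jordan (e+s) c)
    have h2' : (((e-s)*(e-s))*c)*(e-s) - ((e-s)*(e-s))*(c*(e-s)) = 0 :=
      sub_eq_zero_of_eq (jordan (e-s) c)
    have h3 : ((s*s)*c)*s - (s*s)*(c*s) = 0 := sub_eq_zero_of_eq (jordan s c)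
    have key :
        (((e*s)*c)*e + ((s*e)*c)*e + ((e*e)*c)*s
            - ((e*s)*(c*e) + (s*e)*(c*e) + (e*e)*(c*s)))
        + (((e*s)*c)*e + ((s*e)*c)*e + ((e*e)*c)*s
            - ((e*s)*(c*e) + (s*e)*(c*e) + (e*e)*(c*s)))
        = ((((e+s)*(e+s))*c)*(e+s) - ((e+s)*(e+s))*(c*(e+s)))
          - ((((e-s)*(e-s))*c)*(e-s) - ((e-s)*(e-s))*(c*(e-s)))
          - ((((s*s)*c)*s - (s*s)*(c*s)) + (((s*s)*c)*s - (s*s)*(c*s))) := by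
      simp only [add_mul, mul_add, sub_mul, mul_sub]
      abel
    rw [h1, h2', h3] at key
    simp only [sub_zero, zero_sub, add_zero, neg_zero] at key
    exact sub_eq_zero.mp (tf _ key)
  -- Peirce relation for idempotents: 2 L_e³ y + L_e y = 3 L_e² y.
  have peirce : ∀ e y : A, e * e = e →
      e*(e*(e*y)) + e*(e*(e*y)) + e*y = e*(e*y) + e*(e*y) + e*(e*y) := by
    intro e y he
    have h := lin e y e
    rw [he, he] at h
    rw [comm y e] at h
    rw [comm (e*y) e] at h
    rw [comm (e*(e*y)) e] at h
    exact h
  -- Core lemma: a square whose square is zero, is zero.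
  have core : ∀ x : A, x ∈ sqSet A → x * x = 0 → x = 0 := by
    intro x hxs hxx
    obtain ⟨e, he, hset⟩ := RJ x
    have heU : Uop e e = e := by
      rw [Uop, he, he, two_nsmul]; abel
    have heL : Uop e x = 0 := by
      have hmem : e ∈ Set.range (Uop e) ∩ sqSet A := ⟨⟨e, heU⟩, ⟨e, he⟩⟩
      rw [← hset] at hmem
      exact hmem.1
    have hxU : Uop x x = 0 := by
      rw [Uop, hxx]; simp
    have hxmem : x ∈ {c | Uop c x = 0} ∩ sqSet A := ⟨hxU, hxs⟩
    rw [hset] at hxmem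
    obtain ⟨⟨y, hy⟩, -⟩ := hxmem
    have hex : e * x = x := by
      rw [← hy, Uop, he, two_nsmul, mul_sub, mul_add]
      have h' : e*(e*(e*y)) + e*(e*(e*y)) = e*(e*y) + e*(e*y) + e*(e*y) - e*y :=
        eq_sub_of_add_eq (peirce e y he)
      rw [h']
      abel
    have hfin : Uop e x = x := by
      rw [Uop, he, hex, hex, two_nsmul]; abel
    exact hfin.symm.trans heL
  -- Partial power associativity: x² xᵏ = x^{k+2}.
  have P2 : ∀ (x : A) (k : ℕ), (x*x) * jpow x k = jpow x (k+2) := by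
    intro x k
    induction k with
    | zero => exact comm (x*x) x
    | succ k ih =>
      show (x*x) * jpow x (k+1) = x * jpow x (k+2)
      rw [← ih]
      show (x*x) * (x * jpow x k) = x * ((x*x) * jpow x k)
      rw [comm x (jpow x k), ← jordan x (jpow x k)]
      exact comm _ _
  -- Powers of a square: (x²)^{m+1} = x^{2m+2}.
  have jsq : ∀ (x : A) (m : ℕ), jpow (x*x) m = jpow x (2*m+1) := by
    intro x m
    induction m with
    | zero => rfl
    | succ m ih =>
      show (x*x) * jpow (x*x) m = jpow x (2*(m+1)+1)
      rw [ih, P2 x (2*m+1)]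
      congr 1
  -- Higher powers of a nilpotent vanish.
  have jmono : ∀ (x : A) (m k : ℕ), jpow x m = 0 → jpow x (m + k) = 0 := by
    intro x m k h
    induction k with
    | zero => exact h
    | succ k ih =>
      show x * jpow x (m + k) = 0
      rw [ih, mul_zero]
  -- Main induction on the nilpotency exponent.
  have main : ∀ n : ℕ, ∀ c : A, jpow (c*c) n = 0 → c * c = 0 := by
    intro n
    induction n using Nat.strong_induction_on with
    | _ n ih =>
      intro c hc
      cases n with
      | zero => exact hc
      | succ m =>
        set t := (m+1)/2 with ht
        have h1 : jpow (c*c) (m+1+((2*t+1)-(m+1))) = 0 := jmono _ _ _ hc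
        have h2 : jpow ((c*c)*(c*c)) t = 0 := by
          rw [jsq]
          have he : m+1+((2*t+1)-(m+1)) = 2*t+1 := by omega
          rw [← he]; exact h1
        have h3 : (c*c)*(c*c) = 0 := ih t (by omega) (c*c) h2
        exact core (c*c) ⟨c, rfl⟩ h3
  have hb : jpow (b*b) n = 0 := by rw [hsq]; exact hnil
  rw [← hsq]
  exact main n b hb
end

section
/- Let A be an RJ-algebra with identity element 1 on A² (provided by the RJ condition), and let e be an idempotent in A. Then {a ∈ A² : U_a e = 0} = U_{1-e}(A) ∩ A². -/
/-- For an idempotent `f`, the operator identity `2 L_f³ + L_f = 3 L_f²`. -/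
lemma idem_cube {F A : Type*} [Field F] [NonUnitalNonAssocRing A] [Module F A]
    (h2 : (2 : F) ≠ 0)
    (comm : ∀ a b : A, a * b = b * a)
    (jordan : ∀ a b : A, ((a * a) * b) * a = (a * a) * (b * a))
    {f : A} (hf : f * f = f) (b : A) :
    2 • (f*(f*(f*b))) + f*b = 3 • (f*(f*b)) := by
  have key : (2 • (f*(f*(f*b))) + f*b) + (2 • (f*(f*(f*b))) + f*b)
      = 3 • (f*(f*b)) + 3 • (f*(f*b)) := by
    have hP := jordan (f + b) f
    have hM := jordan (f - b) f
    have hQ := jordan b f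
    simp only [mul_add, add_mul, mul_sub, sub_mul, hf] at hP hM hQ
    rw [comm b f] at hP hM
    rw [comm (b*b) f] at hP hM hQ
    rw [comm (f*b) f] at hP hM
    rw [comm (f*(f*b)) f] at hP hM
    rw [comm (f*(b*b)) f] at hP hM
    linear_combination (norm := abel) hP - hM - hQ - hQ
  have h2s : (2:F) • (2 • (f*(f*(f*b))) + f*b) = (2:F) • (3 • (f*(f*b))) := by
    rw [two_smul F, two_smul F]; exact key
  have := congrArg (fun v => (2:F)⁻¹ • v) h2s
  simpa [smul_smul, inv_mul_cancel₀ h2] using this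

/-- For an idempotent `f`, `f * Uop f b = Uop f b`. -/
lemma idem_fix {F A : Type*} [Field F] [NonUnitalNonAssocRing A] [Module F A]
    (h2 : (2 : F) ≠ 0)
    (comm : ∀ a b : A, a * b = b * a)
    (jordan : ∀ a b : A, ((a * a) * b) * a = (a * a) * (b * a))
    {f : A} (hf : f * f = f) (b : A) :
    f * Uop f b = Uop f b := by
  have h := idem_cube h2 comm jordan hf b
  unfold Uop
  rw [hf, mul_sub, mul_smul_comm]
  linear_combination (norm := abel) h

theorem RJ_perp_of_idempotent {F A : Type*} [Field F]
    [NonUnitalNonAssocRing A] [Module F A] (h2 : (2 : F) ≠ 0)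
    (comm : ∀ a b : A, a * b = b * a)
    (jordan : ∀ a b : A, ((a * a) * b) * a = (a * a) * (b * a))
    (RJ : ∀ x : A, ∃ f : A, f * f = f ∧
      {a | Uop a x = 0} ∩ sqSet A = Set.range (Uop f) ∩ sqSet A)
    (one : A) (hone_idem : one * one = one) (hone : ∀ a ∈ sqSet A, one * a = a)
    (e : A) (he : e * e = e) :
    {a | Uop a e = 0} ∩ sqSet A = Set.range (Uop (one - e)) ∩ sqSet A := by
  obtain ⟨f, hf, hset⟩ := RJ e
  have hesq : e ∈ sqSet A := ⟨e, he⟩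
  have h1e : one * e = e := hone e hesq
  have hge : (one - e) * e = 0 := by rw [sub_mul, h1e, he, sub_self]
  have hgg : (one - e) * (one - e) = one - e := by
    rw [mul_sub, hge, sub_zero, comm, mul_sub, hone_idem, h1e]
  suffices hfg : f = one - e by rw [← hfg]; exact hset
  -- f lies in the right-hand set, hence Uop f e = 0
  have hUff : Uop f f = f := by unfold Uop; rw [hf, hf, two_smul]; abel
  have hfmem : f ∈ Set.range (Uop f) ∩ sqSet A := ⟨⟨f, hUff⟩, ⟨f, hf⟩⟩
  rw [← hset] at hfmem
  have hUfe : Uop f e = 0 := hfmem.1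
  have hfsq : f ∈ sqSet A := ⟨f, hf⟩
  have h1f : one * f = f := hone f hfsq
  have hfone : f * one = f := by rw [comm]; exact h1f
  -- one - e lies in the left-hand set, hence in the range of Uop f
  have hUge : Uop (one - e) e = 0 := by
    unfold Uop; rw [hge, mul_zero, smul_zero, hgg, hge, sub_zero]
  have hgmem : one - e ∈ {a | Uop a e = 0} ∩ sqSet A := ⟨hUge, ⟨one - e, hgg⟩⟩
  rw [hset] at hgmem
  obtain ⟨⟨c, hc⟩, -⟩ := hgmem
  have hfg1 : f * (one - e) = one - e := by
    rw [← hc]; exact idem_fix h2 comm jordan hf c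
  -- w := f * e satisfies 2 • (f * w) = w
  have hw : 2 • (f * (f * e)) = f * e := by
    have h := hUfe; unfold Uop at h; rw [hf] at h
    exact sub_eq_zero.mp h
  have hA : f = (one - e) + f * e := by
    calc f = f * one := hfone.symm
    _ = f * ((one - e) + e) := by rw [sub_add_cancel]
    _ = f * (one - e) + f * e := mul_add f _ _
    _ = (one - e) + f * e := by rw [hfg1]
  have hB : f = (one - e) + f * (f * e) := by
    calc f = f * f := hf.symm
    _ = f * ((one - e) + f * e) := by rw [← hA]
    _ = f * (one - e) + f * (f * e) := mul_add f _ _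
    _ = (one - e) + f * (f * e) := by rw [hfg1]
  have hC : f * e = f * (f * e) := add_left_cancel (hA.symm.trans hB)
  have hw0 : f * e = 0 := by
    rw [← hC, two_smul] at hw
    exact add_eq_left.mp (by rw [add_comm] at hw; exact hw)
  rw [hA, hw0, add_zero]
end

section
/- Every RJ-algebra is quadratic non-degenerate: if a ∈ A² is nonzero, then U_a(A) ≠ {0}. -/
lemma Uop_expand {A : Type*} [NonUnitalNonAssocRing A] (a x : A) :
    Uop a x = a*(a*x) + a*(a*x) - (a*a)*x := by
  rw [Uop, two_smul]

/-- Linearized Jordan identity at an idempotent: `2 L_e³ + L_e = 3 L_e²`. -/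
lemma key_L {A : Type*} [NonUnitalNonAssocRing A]
    (comm : ∀ a b : A, a * b = b * a)
    (jordan : ∀ a b : A, ((a * a) * b) * a = (a * a) * (b * a))
    (half : ∀ v : A, v + v = 0 → v = 0)
    {e : A} (he : e * e = e) (x : A) :
    e*(e*(e*x)) + e*(e*(e*x)) + e*x = e*(e*x) + e*(e*x) + e*(e*x) := by
  set LK := e*(e*(e*x)) + e*(e*(e*x)) + e*x with hLK
  set RK := e*(e*x) + e*(e*x) + e*(e*x) with hRK
  have hd : (((e+x)*(e+x))*e)*(e+x) - (((e-x)*(e-x))*e)*(e-x)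
      = ((e+x)*(e+x))*(e*(e+x)) - ((e-x)*(e-x))*(e*(e-x)) := by
    rw [jordan (e+x) e, jordan (e-x) e]
  have hj := jordan x e
  have hcomb : (LK - RK) + (LK - RK) =
      ((((e+x)*(e+x))*e)*(e+x) - (((e-x)*(e-x))*e)*(e-x)
        - (((e+x)*(e+x))*(e*(e+x)) - ((e-x)*(e-x))*(e*(e-x))))
      - ((((x*x)*e)*x) - ((x*x)*(e*x))) - ((((x*x)*e)*x) - ((x*x)*(e*x))) := by
    simp only [hLK, hRK, add_mul, mul_add, sub_mul, mul_sub, he,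
      comm x e, comm (e*x) e, comm (x*x) e, comm (e*(e*x)) e]
    abel
  have hz : (LK - RK) + (LK - RK) = 0 := by
    rw [hcomb, hd, hj]; abel
  exact sub_eq_zero.mp (half _ hz)

/-- For an idempotent `e`, the operator `U_e` is a projection. -/
lemma Uop_proj {A : Type*} [NonUnitalNonAssocRing A]
    (comm : ∀ a b : A, a * b = b * a)
    (jordan : ∀ a b : A, ((a * a) * b) * a = (a * a) * (b * a))
    (half : ∀ v : A, v + v = 0 → v = 0)
    {e : A} (he : e * e = e) (z : A) :
    Uop e (Uop e z) = Uop e z := by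
  have K1 := key_L comm jordan half he z
  have K2 := key_L comm jordan half he (e*z)
  simp only [Uop_expand, he, mul_sub, mul_add]
  have h : ∀ X Y P1 Q1 P2 Q2 : A, P1 = Q1 → P2 = Q2 →
      (X - Y) = (P1 - Q1) + ((P2 - Q2) + (P2 - Q2)) → X = Y := by
    intro X Y P1 Q1 P2 Q2 h1 h2 h3
    rw [h1, h2] at h3; simp at h3; exact sub_eq_zero.mp h3
  apply h _ _ _ _ _ _ K1 K2
  abel

theorem RJ_quadratic_nondegenerate {F A : Type*} [Field F]
    [NonUnitalNonAssocRing A] [Module F A] (h2 : (2 : F) ≠ 0)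
    (comm : ∀ a b : A, a * b = b * a)
    (jordan : ∀ a b : A, ((a * a) * b) * a = (a * a) * (b * a))
    (RJ : ∀ x : A, ∃ e : A, e * e = e ∧
      {a | Uop a x = 0} ∩ sqSet A = Set.range (Uop e) ∩ sqSet A)
    (a : A) (ha : a ∈ sqSet A) (hne : a ≠ 0) : ∃ x : A, Uop a x ≠ 0 := by
  by_contra hcon
  push_neg at hcon
  apply hne
  have half : ∀ v : A, v + v = 0 → v = 0 := by
    intro v hv
    have h2v : (2 : F) • v = 0 := by rw [two_smul]; exact hv
    calc v = (2:F)⁻¹ • ((2:F) • v) := (inv_smul_smul₀ h2 v).symm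
    _ = 0 := by rw [h2v, smul_zero]
  obtain ⟨e, he, hset⟩ := RJ a
  have hUee : Uop e e = e := by
    simp only [Uop_expand, he]; abel
  have hein : e ∈ Set.range (Uop e) ∩ sqSet A := ⟨⟨e, hUee⟩, ⟨e, he⟩⟩
  rw [← hset] at hein
  have hUea : Uop e a = 0 := hein.1
  have hain : a ∈ {z : A | Uop z a = 0} ∩ sqSet A := ⟨hcon a, ha⟩
  rw [hset] at hain
  obtain ⟨y, hy⟩ := hain.1
  have proj := Uop_proj comm jordan half he y
  rw [hy] at proj
  exact proj.symm.trans hUea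
end

section
/- Let A be a BJ-algebra (for every subset S ⊆ A there exists an idempotent e with {a ∈ A² : U_a x = 0 ∀x ∈ S} = U_e(A) ∩ A²). Then the set of all idempotents of A, ordered by e ≤ f iff e∘f = e, forms a complete lattice. -/
section BJaux

variable {A : Type*} [NonUnitalNonAssocRing A]

/-- In a (2-torsion-free) linear Jordan ring, the range of `U_e` for an idempotent `e`
lies in the `1`-eigenspace of multiplication by `e`. -/
theorem BJaux_L1 (comm : ∀ a b : A, a * b = b * a)
    (jordan : ∀ a b : A, ((a * a) * b) * a = (a * a) * (b * a))
    (half : ∀ x y : A, x + x = y + y → x = y)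
    (e y : A) (he : e * e = e) : (Uop e y) * e = Uop e y := by
  apply half
  have j1 := jordan y e
  have j2 := jordan (e+y) e
  have j3 := jordan (e-y) e
  have K : (-(((y*y)*e)*y - (y*y)*(e*y)) + -(((y*y)*e)*y - (y*y)*(e*y))
      + ((((e+y)*(e+y))*e)*(e+y) - ((e+y)*(e+y))*(e*(e+y)))
      - ((((e-y)*(e-y))*e)*(e-y) - ((e-y)*(e-y))*(e*(e-y))) : A) = 0 := by
    rw [j1, j2, j3]; simp
  rw [← sub_eq_zero, ← K, Uop]
  simp only [two_smul, he, mul_add, add_mul, mul_sub, sub_mul]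
  simp only [comm]
  abel

/-- `f ≤ g` (for idempotents) and `U_g x = 0` imply `U_f x = 0`. -/
theorem BJaux_LD (comm : ∀ a b : A, a * b = b * a)
    (jordan : ∀ a b : A, ((a * a) * b) * a = (a * a) * (b * a))
    (half : ∀ x y : A, x + x = y + y → x = y)
    (f g x : A) (hf : f * f = f) (hg : g * g = g) (hfg : f * g = f)
    (hUgx : Uop g x = 0) : Uop f x = 0 := by
  have hgf : g * f = f := (comm g f).trans hfg
  have hU : (2 • (g * (g * x)) - (g * g) * x : A) = 0 := hUgx
  apply half
  have K : (- (((x * x) * f) * x - ((x * x)) * (f * x)) - (((x * x) * f) * x - ((x * x)) * (f * x)) + (((x * x) * g) * x - ((x * x)) * (g * x)) + (((x * x) * g) * x - ((x * x)) * (g * x)) + (((x * x) * g) * x - ((x * x)) * (g * x)) + (((x * x) * g) * x - ((x * x)) * (g * x)) + ((((f + g) * (f + g)) * x) * (f + g) - (((f + g) * (f + g))) * (x * (f + g))) - ((((f + g) * (f + g)) * (g*x)) * (f + g) - (((f + g) * (f + g))) * ((g*x) * (f + g))) - ((((f + g) * (f + g)) * (g*x)) * (f + g) - (((f + g) * (f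 + g))) * ((g*x) * (f + g))) - ((((f + x) * (f + x)) * g) * (f + x) - (((f + x) * (f + x))) * (g * (f + x))) - ((((f + x) * (f + x)) * g) * (f + x) - (((f + x) * (f + x))) * (g * (f + x))) + ((((f - x) * (f - x)) * g) * (f - x) - (((f - x) * (f - x))) * (g * (f - x))) + ((((f - x) * (f - x)) * g) * (f - x) - (((f - x) * (f - x))) * (g * (f - x))) + ((((g + x) * (g + x)) * f) * (g + x) - (((g + x) * (g + x))) * (f * (g + x))) - ((((g - x) * (g - x)) * f) * (g - x) - (((g - x) * (g - x))) * (f * (g - x))) + (f * (((x * x) * f) * x - ((x * x)) * (f * x))) + (f * (((x * x) * f) * x - ((x * x)) * (f * x))) + (f * (((x * x) * f) * x - ((x * x)) * (f * x))) + (f * (((x * x) * f) * x - ((x * x)) * (f * x))) + (f * ((((f + g) * (f + g)) * x) * (f + g) - (((f + g) * (f + g))) * (x * (f + g)))) + (f * ((((f + g) * (f + g)) * x) * (f + g) - (((f + g) * (f + g))) * (x * (f + g)))) + (f * ((((f + g) * (f + g)) * (g*x)) * (f + g) - (((f + g) * (f + g))) * ((g*x) * (f + g)))) + (f * ((((f +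 g) * (f + g)) * (g*x)) * (f + g) - (((f + g) * (f + g))) * ((g*x) * (f + g)))) + (f * ((((f + g) * (f + g)) * (g*x)) * (f + g) - (((f + g) * (f + g))) * ((g*x) * (f + g)))) + (f * ((((f + g) * (f + g)) * (g*x)) * (f + g) - (((f + g) * (f + g))) * ((g*x) * (f + g)))) - (f * ((((g + x) * (g + x)) * f) * (g + x) - (((g + x) * (g + x))) * (f * (g + x)))) - (f * ((((g + x) * (g + x)) * f) * (g + x) - (((g + x) * (g + x))) * (f * (g + x)))) + (f * ((((g - x) * (g - x)) * f) * (g - x) - (((g - x) * (g - x))) * (f * (g - x)))) + (f * ((((g - x) * (g - x)) * f) * (g - x) - (((g - x) * (g - x))) * (f * (g - x)))) - (f * (2 • (g * (g * x)) - (g * g) * x)) - (f * (2 • (g * (g * x)) - (g * g) * x)) + (f * (f * (2 • (g * (g * x)) - (g * g) * x))) + (f * (f * (2 • (g * (g * x)) - (g * g) * x))) + (f * (f * (2 • (g * (g * x)) - (g * g) * x))) + (f * (f * (2 • (g * (g * x)) - (g * g) * x))) : A) = 0 := by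
    rw [jordan x f, jordan x g, jordan (f+g) x, jordan (f+g) (g*x), jordan (f+x) g,
        jordan (f-x) g, jordan (g+x) f, jordan (g-x) f, hU]
    simp
  rw [add_zero, ← K, Uop]
  simp only [two_smul, hf, hg, hfg, hgf, mul_add, add_mul, mul_sub, sub_mul,
    mul_zero, zero_mul, add_zero, zero_add, sub_zero, zero_sub, mul_neg, neg_mul, neg_neg]
  simp only [comm]
  abel

/-- Orthogonality lemma: if `p ⊥ f` and `e ≤ f` (idempotents) then `U_p e = 0`. -/
theorem BJaux_L3 (comm : ∀ a b : A, a * b = b * a)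
    (jordan : ∀ a b : A, ((a * a) * b) * a = (a * a) * (b * a))
    (half : ∀ x y : A, x + x = y + y → x = y)
    (p f e : A) (hp : p * p = p) (hf : f * f = f) (he : e * e = e)
    (hpf : p * f = 0) (hef : e * f = e) : Uop p e = 0 := by
  have hfp : f * p = 0 := (comm f p).trans hpf
  have hfe : f * e = e := (comm f e).trans hef
  apply half
  have K : ((((p+e) * (p+e)) * f) * (p+e) - ((p+e) * (p+e)) * (f * (p+e))
      - ((((p-e) * (p-e)) * f) * (p-e) - ((p-e) * (p-e)) * (f * (p-e)))
      + (p * ((((p-f) * (p-f)) * e) * (p-f) - ((p-f) * (p-f)) * (e * (p-f)))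
      + p * ((((p-f) * (p-f)) * e) * (p-f) - ((p-f) * (p-f)) * (e * (p-f)))) : A) = 0 := by
    rw [jordan (p+e) f, jordan (p-e) f, jordan (p-f) e]
    simp
  rw [add_zero, ← K, Uop]
  simp only [two_smul, hp, hf, he, hpf, hfp, hef, hfe, mul_add, add_mul, mul_sub, sub_mul,
    mul_zero, zero_mul, add_zero, zero_add, sub_zero, zero_sub, mul_neg, neg_mul, neg_neg]
  simp only [comm]
  abel

end BJaux

theorem BJ_idempotents_complete_lattice {F A : Type*} [Field F]
    [NonUnitalNonAssocRing A] [Module F A] (h2 : (2 : F) ≠ 0)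
    (comm : ∀ a b : A, a * b = b * a)
    (jordan : ∀ a b : A, ((a * a) * b) * a = (a * a) * (b * a))
    (BJ : ∀ S : Set A, ∃ e : A, e * e = e ∧
      {a | ∀ x ∈ S, Uop a x = 0} ∩ sqSet A = Set.range (Uop e) ∩ sqSet A) :
    ∃ L : CompleteLattice {e : A // e * e = e},
      ∀ e f : {e : A // e * e = e}, L.le e f ↔ (e : A) * f = e := by
  classical
  -- 2-torsion-freeness from the `F`-module structure
  have half : ∀ x y : A, x + x = y + y → x = y := by
    intro x y h
    have h2' : (2:F) • x = (2:F) • y := by rw [two_smul, two_smul]; exact h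
    have := congrArg (fun z : A => (2:F)⁻¹ • z) h2'
    simpa [inv_smul_smul₀ h2] using this
  have idem_Uop_self : ∀ e : A, e * e = e → Uop e e = e := by
    intro e he
    rw [Uop, he, he, two_smul]
    exact add_sub_cancel_right e e
  have Uop_zero_of_mul_zero : ∀ a x : A, a * a = a → a * x = 0 → Uop a x = 0 := by
    intro a x ha h
    rw [Uop, h, ha, h]
    simp
  choose bj bj_idem bj_set using BJ
  -- elements of `range U_(bj S) ∩ Sq` include all squares annihilating S, and then `L1` applies
  have mem_of : ∀ (S : Set A) (a : A), (∀ x ∈ S, Uop a x = 0) → (∃ b, b * b = a) →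
      a * bj S = a := by
    intro S a hann hsq
    have h1 : a ∈ ({a | ∀ x ∈ S, Uop a x = 0} ∩ sqSet A) := ⟨hann, hsq⟩
    rw [bj_set S] at h1
    obtain ⟨⟨y, hy⟩, -⟩ := h1
    have hL := BJaux_L1 comm jordan half (bj S) y (bj_idem S)
    rw [hy] at hL
    exact hL
  have ann_of : ∀ (S : Set A) (x : A), x ∈ S → Uop (bj S) x = 0 := by
    intro S x hx
    have h1 : bj S ∈ Set.range (Uop (bj S)) ∩ sqSet A :=
      ⟨⟨bj S, idem_Uop_self _ (bj_idem S)⟩, ⟨bj S, bj_idem S⟩⟩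
    rw [← bj_set S] at h1
    exact h1.1 x hx
  -- the top idempotent
  set u : A := bj ∅ with hu_def
  have hu : u * u = u := bj_idem ∅
  have top_mul : ∀ a : A, (∃ b, b * b = a) → a * u = a := by
    intro a hsq
    exact mem_of ∅ a (by simp) hsq
  have idem_comp : ∀ q : A, q * q = q → (u - q) * (u - q) = u - q := by
    intro q hq
    have hqu : q * u = q := top_mul q ⟨q, hq⟩
    have huq : u * q = q := (comm u q).trans hqu
    rw [sub_mul, mul_sub, mul_sub, hu, hq, hqu, huq]
    abel
  -- the annihilator idempotent of {q} is u - q; consequence: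
  have comp_mul : ∀ q : A, q * q = q → ∀ a : A, Uop a q = 0 → (∃ b, b * b = a) →
      a * (u - q) = a := by
    intro q hq a haq hasq
    have hqu : q * u = q := top_mul q ⟨q, hq⟩
    have huq : u * q = q := (comm u q).trans hqu
    have hci : (u - q) * (u - q) = u - q := idem_comp q hq
    have hcq : (u - q) * q = 0 := by rw [sub_mul, huq, hq]; exact sub_self q
    have he'i : bj {q} * bj {q} = bj {q} := bj_idem {q}
    have he'q : Uop (bj {q}) q = 0 := ann_of {q} q rfl
    have hcqU : Uop (u - q) q = 0 := Uop_zero_of_mul_zero _ _ hci hcq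
    have h1 : (u - q) * bj {q} = u - q := by
      refine mem_of {q} (u - q) ?_ ⟨u - q, hci⟩
      intro x hx
      rw [Set.mem_singleton_iff.mp hx]
      exact hcqU
    have h1' : bj {q} * (u - q) = u - q := (comm _ _).trans h1
    have he'u : bj {q} * u = bj {q} := top_mul _ ⟨_, he'i⟩
    have hcu : (u - q) * u = u - q := by rw [sub_mul, hu, hqu]
    have hde' : (bj {q} - (u - q)) * bj {q} = bj {q} - (u - q) := by
      rw [sub_mul, he'i, h1]
    have hdu : (bj {q} - (u - q)) * u = bj {q} - (u - q) := by
      rw [sub_mul, he'u, hcu]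
    have hd0 : (bj {q} - (u - q)) * (u - q) = 0 := by
      rw [sub_mul, h1', hci, sub_self]
    have hdq : (bj {q} - (u - q)) * q = bj {q} - (u - q) := by
      have h3 : (bj {q} - (u - q)) * (u - (u - q)) = bj {q} - (u - q) := by
        rw [mul_sub, hdu, hd0, sub_zero]
      rwa [sub_sub_cancel] at h3
    have hdidem : (bj {q} - (u - q)) * (bj {q} - (u - q)) = bj {q} - (u - q) := by
      rw [mul_sub, hd0, sub_zero]
      exact hde'
    have hUdq : Uop (bj {q} - (u - q)) q = bj {q} - (u - q) := by
      rw [Uop, hdq, hdidem, hdq, two_smul]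
      exact add_sub_cancel_right _ _
    have hUd0 : Uop (bj {q} - (u - q)) q = 0 :=
      BJaux_LD comm jordan half (bj {q} - (u - q)) (bj {q}) q hdidem he'i hde' he'q
    have he'eq : bj {q} = u - q := sub_eq_zero.mp (hUdq.symm.trans hUd0)
    have h4 := mem_of {q} a (by intro x hx; rw [Set.mem_singleton_iff.mp hx]; exact haq) hasq
    rwa [he'eq] at h4
  -- dictionary: for idempotents, U_a q = 0 iff a q = 0
  have dict : ∀ a q : A, a * a = a → q * q = q → Uop a q = 0 → a * q = 0 := by
    intro a q ha hq h
    have h1 : a * (u - q) = a := comp_mul q hq a h ⟨a, ha⟩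
    have h2 : a * u = a := top_mul a ⟨a, ha⟩
    rw [mul_sub, h2] at h1
    exact sub_eq_self.mp h1
  -- transitivity of the idempotent order
  have trans : ∀ e f g : A, e * e = e → f * f = f → g * g = g →
      e * f = e → f * g = f → e * g = e := by
    intro e f g he hf hg hef hfg
    have hp : (u - g) * (u - g) = u - g := idem_comp g hg
    have hpf : (u - g) * f = 0 := by
      have hfu : f * u = f := top_mul f ⟨f, hf⟩
      have huf : u * f = f := (comm u f).trans hfu
      have hgf : g * f = f := (comm g f).trans hfg
      rw [sub_mul, huf, hgf, sub_self]
    have hU : Uop (u - g) e = 0 := BJaux_L3 comm jordan half (u - g) f e hp hf he hpf hef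
    have hpe : (u - g) * e = 0 := dict (u - g) e hp he hU
    have heu : e * u = e := top_mul e ⟨e, he⟩
    have hue : u * e = e := (comm u e).trans heu
    rw [sub_mul, hue] at hpe
    exact (comm e g).trans (sub_eq_zero.mp hpe).symm
  letI : PartialOrder {e : A // e * e = e} :=
    { le := fun e f => (e : A) * f = e
      le_refl := fun e => e.2
      le_trans := fun a b c hab hbc => trans a b c a.2 b.2 c.2 hab hbc
      le_antisymm := fun a b hab hba =>
        Subtype.ext ((hab.symm.trans (comm a b)).trans hba) }
  letI : SupSet {e : A // e * e = e} :=
    ⟨fun T => ⟨u - bj (Subtype.val '' T), idem_comp _ (bj_idem _)⟩⟩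
  have isLUB : ∀ T : Set {e : A // e * e = e}, IsLUB T (sSup T) := by
    intro T
    constructor
    · intro f hf
      show (f : A) * (u - bj (Subtype.val '' T)) = f
      have hUf : Uop (bj (Subtype.val '' T)) f = 0 := ann_of _ f ⟨f, hf, rfl⟩
      have hef0 : bj (Subtype.val '' T) * f = 0 := dict _ _ (bj_idem _) f.2 hUf
      have hfe0 : (f : A) * bj (Subtype.val '' T) = 0 := (comm _ _).trans hef0
      have hfu : (f : A) * u = f := top_mul f ⟨f, f.2⟩
      rw [mul_sub, hfu, hfe0, sub_zero]
    · intro g hg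
      show ((u - bj (Subtype.val '' T) : A)) * g = u - bj (Subtype.val '' T)
      have hann : ∀ x ∈ Subtype.val '' T, Uop ((u : A) - g) x = 0 := by
        rintro x ⟨f, hfT, rfl⟩
        have hfg : (f : A) * g = f := hg hfT
        have hgf : (g : A) * f = f := (comm _ _).trans hfg
        have hfu : (f : A) * u = f := top_mul f ⟨f, f.2⟩
        have huf : (u : A) * f = f := (comm _ _).trans hfu
        have h0 : ((u : A) - g) * f = 0 := by rw [sub_mul, huf, hgf, sub_self]
        exact Uop_zero_of_mul_zero _ _ (idem_comp g g.2) h0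
      have h1 : ((u : A) - g) * bj (Subtype.val '' T) = (u : A) - g :=
        mem_of _ _ hann ⟨u - g, idem_comp g g.2⟩
      have hgu : (g : A) * u = g := top_mul g ⟨g, g.2⟩
      have hug : (u : A) * g = g := (comm _ _).trans hgu
      rw [sub_mul, (comm u (bj (Subtype.val '' T))).trans
        (top_mul _ ⟨_, bj_idem _⟩)] at h1
      have h2 : (g : A) * bj (Subtype.val '' T)
          = bj (Subtype.val '' T) - ((u : A) - g) := by rw [← h1]; abel
      rw [sub_mul, hug, comm (bj (Subtype.val '' T)) (g : A), h2]
      abel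
  exact ⟨completeLatticeOfSup _ isLUB, fun e f => Iff.rfl⟩
end

section
/- A Jordan algebra A is a BJ-algebra if and only if A is an RJ-algebra and its set of idempotents (ordered by e ≤ f iff e∘f = e) is a complete lattice. -/
namespace BJaux
variable {F A : Type*} [Field F] [NonUnitalNonAssocRing A] [Module F A]

lemma cancel2 (h2 : (2:F) ≠ 0) {x y : A} (h : x + x = y + y) : x = y := by
  have h' : (2:F) • x = (2:F) • y := by rw [two_smul, two_smul]; exact h
  calc x = (2:F)⁻¹ • ((2:F) • x) := (inv_smul_smul₀ h2 x).symm
    _ = (2:F)⁻¹ • ((2:F) • y) := by rw [h']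
    _ = y := inv_smul_smul₀ h2 y

lemma fullLin (h2 : (2:F) ≠ 0) (comm : ∀ a b : A, a * b = b * a)
    (jordan : ∀ a b : A, ((a * a) * b) * a = (a * a) * (b * a)) (a b c d : A) :
    ((a*d)*b)*c + ((a*c)*b)*d + ((d*c)*b)*a
      = (a*d)*(b*c) + (a*c)*(b*d) + (d*c)*(b*a) := by
  have key : (((a*d)*b)*c + ((d*a)*b)*c + ((a*c)*b)*d + ((c*a)*b)*d + ((d*c)*b)*a + ((c*d)*b)*a)
      = ((a*d)*(b*c) + (d*a)*(b*c) + (a*c)*(b*d) + (c*a)*(b*d) + (d*c)*(b*a) + (c*d)*(b*a)) := by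
    have e1 := jordan (a+d+c) b
    have e2 := jordan (a+d) b
    have e3 := jordan (a+c) b
    have e4 := jordan (d+c) b
    have e5 := jordan a b
    have e6 := jordan d b
    have e7 := jordan c b
    simp only [add_mul, mul_add] at e1 e2 e3 e4
    linear_combination (norm := abel) e1 - e2 - e3 - e4 + e5 + e6 + e7
  rw [comm d a, comm c a, comm c d] at key
  exact cancel2 h2 (by linear_combination (norm := abel) key)

lemma Uop_eq (a x : A) : Uop a x = (a*(a*x) + a*(a*x)) - (a*a)*x := by
  rw [Uop, two_smul]

lemma opA (h2 : (2:F) ≠ 0) (comm : ∀ a b : A, a * b = b * a)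
    (jordan : ∀ a b : A, ((a * a) * b) * a = (a * a) * (b * a))
    {e : A} (he : e*e = e) (z : A) :
    e*(e*(e*z)) + e*(e*(e*z)) + e*z = e*(e*z) + e*(e*z) + e*(e*z) := by
  have h := fullLin h2 comm jordan z e e e
  simp only [he] at h
  rw [comm z e, comm (e*z) e, comm (e*(e*z)) e] at h
  exact h

lemma opI2 (h2 : (2:F) ≠ 0) (comm : ∀ a b : A, a * b = b * a)
    (jordan : ∀ a b : A, ((a * a) * b) * a = (a * a) * (b * a))
    {e : A} (he : e*e = e) (a b : A) :
    ((a*e)*b)*e + ((a*e)*b)*e + (e*b)*a = (a*e)*(b*e) + (a*e)*(b*e) + e*(b*a) := by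
  have h := fullLin h2 comm jordan a b e e
  simp only [he] at h
  exact h

lemma Uop_self {e : A} (he : e*e = e) : Uop e e = e := by
  rw [Uop_eq, he, he]; abel

lemma fix_of_mem_range (h2 : (2:F) ≠ 0) (comm : ∀ a b : A, a * b = b * a)
    (jordan : ∀ a b : A, ((a * a) * b) * a = (a * a) * (b * a))
    {e x : A} (he : e*e = e) (hx : x ∈ Set.range (Uop e)) :
    e * x = x := by
  obtain ⟨y, rfl⟩ := hx
  have hU : Uop e y = (e*(e*y) + e*(e*y)) - e*y := by rw [Uop_eq, he]
  rw [hU, mul_sub, mul_add]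
  have h := opA h2 comm jordan he y
  linear_combination (norm := abel) h

lemma mem_range_iff (h2 : (2:F) ≠ 0) (comm : ∀ a b : A, a * b = b * a)
    (jordan : ∀ a b : A, ((a * a) * b) * a = (a * a) * (b * a))
    {e : A} (he : e*e = e) (x : A) :
    x ∈ Set.range (Uop e) ↔ e * x = x := by
  constructor
  · exact fix_of_mem_range h2 comm jordan he
  · intro h
    refine ⟨x, ?_⟩
    rw [Uop_eq, he, h, h]; abel

lemma fix_trans (h2 : (2:F) ≠ 0) (comm : ∀ a b : A, a * b = b * a)
    (jordan : ∀ a b : A, ((a * a) * b) * a = (a * a) * (b * a))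
    {e f x : A} (he : e*e = e) (hef : e*f = e) (hex : e*x = x) :
    f * x = x := by
  have hfe : f*e = e := by rw [comm f e]; exact hef
  have hxe : x*e = x := by rw [comm x e]; exact hex
  have hα := opI2 h2 comm jordan he x f
  rw [hxe, hef, hfe, hxe, hex] at hα
  have hβ := opI2 h2 comm jordan he f x
  rw [hfe, hex, hxe, hex] at hβ
  rw [comm f x, comm (x*f) e] at hα
  have h1 : e*(x*f) = x := by linear_combination (norm := abel) hα
  have h2' : x*f = e*(x*f) := by linear_combination (norm := abel) hβ
  rw [comm f x]
  exact h2'.trans h1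

/-- Key forward lemma: in a BJ-algebra, the annihilator of `ker U_f` is exactly
the squares in the Peirce-1 space of `f`. -/
lemma C_lemma (h2 : (2:F) ≠ 0) (comm : ∀ a b : A, a * b = b * a)
    (jordan : ∀ a b : A, ((a * a) * b) * a = (a * a) * (b * a))
    (BJ : ∀ S : Set A, ∃ e : A, e * e = e ∧
        {a | ∀ x ∈ S, Uop a x = 0} ∩ sqSet A = Set.range (Uop e) ∩ sqSet A)
    {f : A} (hf : f*f = f) :
    {a | ∀ x ∈ {x : A | Uop f x = 0}, Uop a x = 0} ∩ sqSet A
      = Set.range (Uop f) ∩ sqSet A := by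
  obtain ⟨m, hm, hspec⟩ := BJ {x | Uop f x = 0}
  have hfmem : f ∈ Set.range (Uop m) ∩ sqSet A := by
    rw [← hspec]; exact ⟨fun x hx => hx, ⟨f, hf⟩⟩
  have hmf : m * f = f := fix_of_mem_range h2 comm jordan hm hfmem.1
  have hmmem : m ∈ {a | ∀ x ∈ {x : A | Uop f x = 0}, Uop a x = 0} ∩ sqSet A := by
    rw [hspec]; exact ⟨⟨m, Uop_self hm⟩, ⟨m, hm⟩⟩
  have hann : ∀ x : A, Uop f x = 0 → Uop m x = 0 := fun x hx => hmmem.1 x hx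
  have hfc : f * (m - f) = 0 := by rw [mul_sub, comm f m, hmf, hf, sub_self]
  have hUfc : Uop f (m - f) = 0 := by rw [Uop_eq, hf, hfc, mul_zero]; abel
  have hmc : m * (m - f) = m - f := by rw [mul_sub, hm, hmf]
  have hUmc := hann (m - f) hUfc
  rw [Uop_eq, hmc, hmc, hm, hmc] at hUmc
  have hc : m - f = 0 := by linear_combination (norm := abel) hUmc
  have hmf' : m = f := by
    have := sub_eq_zero.mp hc; exact this
  rw [hmf'] at hspec
  exact hspec

/-- Support idempotents exist in RJ-algebras. -/
lemma supp (h2 : (2:F) ≠ 0) (comm : ∀ a b : A, a * b = b * a)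
    (jordan : ∀ a b : A, ((a * a) * b) * a = (a * a) * (b * a))
    (RJ : ∀ x : A, ∃ e : A, e * e = e ∧
        {a | Uop a x = 0} ∩ sqSet A = Set.range (Uop e) ∩ sqSet A)
    {a : A} (hsq : a ∈ sqSet A) :
    ∃ p : A, p*p = p ∧ p*a = a ∧ ∀ f : A, f*f = f → f*a = a → p*f = p := by
  obtain ⟨u, hu, huspec⟩ := RJ 0
  have hufix : ∀ b : A, b ∈ sqSet A → u*b = b := by
    intro b hb
    have hmem : b ∈ Set.range (Uop u) ∩ sqSet A := by
      rw [← huspec]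
      refine ⟨?_, hb⟩
      show Uop b 0 = 0
      simp [Uop]
    exact fix_of_mem_range h2 comm jordan hu hmem.1
  obtain ⟨e, he, hespec⟩ := RJ a
  have hUea : Uop e a = 0 := by
    have hmem : e ∈ {b | Uop b a = 0} ∩ sqSet A := by
      rw [hespec]; exact ⟨⟨e, Uop_self he⟩, ⟨e, he⟩⟩
    exact hmem.1
  have hw2 : e*(e*a) + e*(e*a) = e*a := by
    rw [Uop_eq, he] at hUea
    linear_combination (norm := abel) hUea
  have hua : u * a = a := hufix a hsq
  have hue : u * e = e := hufix e ⟨e, he⟩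
  have heu : e * u = e := by rw [comm e u]; exact hue
  have hcom : ∀ b : A, u*(e*b) = e*(u*b) := by
    intro b
    have h := fullLin h2 comm jordan e b u e
    rw [he, heu] at h
    rw [comm (e*b) u, comm b u, comm (e*b) e, comm b e] at h
    linear_combination (norm := abel) h
  have huw : u*(e*a) = e*a := by
    have h := hcom a; rw [hua] at h; exact h
  have huz : u*(e*a + e*a) = e*a + e*a := by rw [mul_add, huw]
  have hez : e*(e*a + e*a) = e*a := by rw [mul_add]; exact hw2
  have hUez : Uop e (e*a + e*a) = 0 := by
    rw [Uop_eq, he, hez, hw2, sub_self]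
  have hue' : (u-e)*(u-e) = u-e := by
    rw [sub_mul, mul_sub, mul_sub, hu, hue, heu, he]; abel
  have hp'z : (u-e)*(e*a + e*a) = e*a := by
    rw [sub_mul, huz, hez]; abel
  have hp'w : (u-e)*(e*a) = e*a - e*(e*a) := by rw [sub_mul, huw]
  have hUp'z : Uop (u-e) (e*a + e*a) = 0 := by
    rw [Uop_eq, hue', hp'z, hp'w]
    linear_combination (norm := abel) -hw2
  obtain ⟨r, hr, hrspec⟩ := RJ (e*a + e*a)
  have hre : r*e = e := by
    refine fix_of_mem_range h2 comm jordan hr ?_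
    have hmem : e ∈ Set.range (Uop r) ∩ sqSet A := by
      rw [← hrspec]; exact ⟨hUez, ⟨e, he⟩⟩
    exact hmem.1
  have hrp' : r*(u-e) = u-e := by
    refine fix_of_mem_range h2 comm jordan hr ?_
    have hmem : (u-e) ∈ Set.range (Uop r) ∩ sqSet A := by
      rw [← hrspec]; exact ⟨hUp'z, ⟨u-e, hue'⟩⟩
    exact hmem.1
  have hur : u*r = r := hufix r ⟨r, hr⟩
  have hte : (u-r)*e = 0 := by rw [sub_mul, hue, hre, sub_self]
  have htue : (u-r)*(u-e) = 0 := by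
    rw [sub_mul, hrp', mul_sub, hu, hue, sub_self]
  have hut : u*(u-r) = u - r := by rw [mul_sub, hu, hur]
  have htu : (u-r)*u = u - r := by rw [comm (u-r) u]; exact hut
  have ht0 : u - r = 0 := by
    have h1 : (u-r)*((u-e) + e) = 0 := by rw [mul_add, htue, hte, add_zero]
    have h2' : (u-e) + e = u := by abel
    rw [h2', htu] at h1
    exact h1
  have hru : r = u := (sub_eq_zero.mp ht0).symm
  rw [hru] at hrspec
  have hUuz : Uop u (e*a + e*a) = 0 := by
    have hmem : u ∈ {b | Uop b (e*a + e*a) = 0} ∩ sqSet A := by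
      rw [hrspec]; exact ⟨⟨u, Uop_self hu⟩, ⟨u, hu⟩⟩
    exact hmem.1
  have hz0 : e*a + e*a = 0 := by
    rw [Uop_eq, hu, huz, huz] at hUuz
    linear_combination (norm := abel) hUuz
  have hw0 : e*a = 0 := by
    refine cancel2 h2 ?_
    rw [hz0]; abel
  refine ⟨u - e, hue', ?_, ?_⟩
  · rw [sub_mul, hua, hw0, sub_zero]
  · intro f hf hfa
    have hufi : u*f = f := hufix f ⟨f, hf⟩
    have hfu : f*u = f := by rw [comm f u]; exact hufi
    have huf' : (u-f)*(u-f) = u-f := by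
      rw [sub_mul, mul_sub, mul_sub, hu, hufi, hfu, hf]; abel
    have hufa : (u-f)*a = 0 := by rw [sub_mul, hua, hfa, sub_self]
    have hUufa : Uop (u-f) a = 0 := by
      rw [Uop_eq, huf', hufa, mul_zero]; abel
    have hefm : e*(u-f) = u-f := by
      refine fix_of_mem_range h2 comm jordan he ?_
      have hmem : (u-f) ∈ Set.range (Uop e) ∩ sqSet A := by
        rw [← hespec]; exact ⟨hUufa, ⟨u-f, huf'⟩⟩
      exact hmem.1
    have h1 : e*u - e*f = u - f := by rw [← mul_sub]; exact hefm
    rw [heu] at h1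
    rw [sub_mul, hufi]
    linear_combination (norm := abel) h1

end BJaux

open BJaux in
theorem BJ_iff_RJ_and_complete_lattice {F A : Type*} [Field F]
    [NonUnitalNonAssocRing A] [Module F A] (h2 : (2 : F) ≠ 0)
    (comm : ∀ a b : A, a * b = b * a)
    (jordan : ∀ a b : A, ((a * a) * b) * a = (a * a) * (b * a)) :
    (∀ S : Set A, ∃ e : A, e * e = e ∧
        {a | ∀ x ∈ S, Uop a x = 0} ∩ sqSet A = Set.range (Uop e) ∩ sqSet A) ↔
      ((∀ x : A, ∃ e : A, e * e = e ∧
          {a | Uop a x = 0} ∩ sqSet A = Set.range (Uop e) ∩ sqSet A) ∧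
        ∃ L : CompleteLattice {e : A // e * e = e},
          ∀ e f : {e : A // e * e = e}, L.le e f ↔ (e : A) * f = e) := by
  constructor
  · intro BJ
    constructor
    · -- RJ
      intro x
      obtain ⟨e, he, hspec⟩ := BJ {x}
      refine ⟨e, he, ?_⟩
      rw [← hspec]
      congr 1
      ext a
      simp
    · -- complete lattice
      classical
      letI P : PartialOrder {e : A // e * e = e} :=
        { le := fun e f => (e : A) * f = e
          le_refl := fun e => e.2
          le_trans := by
            rintro ⟨e, he⟩ ⟨f, hf⟩ ⟨g, hg⟩ hef hfg
            show e * g = e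
            have hfe : f * e = e := by rw [← comm e f]; exact hef
            have := fix_trans h2 comm jordan hf hfg hfe
            rw [comm e g]; exact this
          le_antisymm := by
            rintro ⟨e, he⟩ ⟨f, hf⟩ hef hfe
            apply Subtype.ext
            show e = f
            calc e = e * f := hef.symm
              _ = f * e := comm e f
              _ = f := hfe }
      letI I : InfSet {e : A // e * e = e} :=
        ⟨fun T => ⟨(BJ {x | ∃ f ∈ T, Uop (f : A) x = 0}).choose,
          (BJ {x | ∃ f ∈ T, Uop (f : A) x = 0}).choose_spec.1⟩⟩
      have key : ∀ (T : Set {e : A // e * e = e}) (h : {e : A // e * e = e}),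
          h ≤ sInf T ↔ ∀ f ∈ T, h ≤ f := by
        intro T h
        have hgi := (BJ {x | ∃ f ∈ T, Uop (f : A) x = 0}).choose_spec.1
        have hgs := (BJ {x | ∃ f ∈ T, Uop (f : A) x = 0}).choose_spec.2
        constructor
        · intro hle f hf
          have hle' : (h : A) * ((sInf T : {e : A // e * e = e}) : A) = h := hle
          have hmemr : (h : A) ∈ Set.range
              (Uop ((BJ {x | ∃ f ∈ T, Uop (f : A) x = 0}).choose)) ∩ sqSet A := by
            refine ⟨(mem_range_iff h2 comm jordan hgi (h : A)).2 ?_, ⟨h, h.2⟩⟩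
            rw [comm]; exact hle'
          rw [← hgs] at hmemr
          have hAnn := hmemr.1
          have hmem2 : (h : A) ∈ {a | ∀ x ∈ {x : A | Uop (f : A) x = 0}, Uop a x = 0}
              ∩ sqSet A := ⟨fun x hx => hAnn x ⟨f, hf, hx⟩, ⟨h, h.2⟩⟩
          rw [C_lemma h2 comm jordan BJ f.2] at hmem2
          have := fix_of_mem_range h2 comm jordan f.2 hmem2.1
          show (h : A) * f = h
          rw [comm]; exact this
        · intro hlb
          have hAnn : (h : A) ∈ {a | ∀ x ∈ {x | ∃ f ∈ T, Uop (f : A) x = 0}, Uop a x = 0}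
              ∩ sqSet A := by
            refine ⟨?_, ⟨h, h.2⟩⟩
            rintro x ⟨f, hf, hx⟩
            have hmem : (h : A) ∈ Set.range (Uop (f : A)) ∩ sqSet A := by
              refine ⟨(mem_range_iff h2 comm jordan f.2 (h : A)).2 ?_, ⟨h, h.2⟩⟩
              rw [comm]; exact hlb f hf
            rw [← C_lemma h2 comm jordan BJ f.2] at hmem
            exact hmem.1 x hx
          rw [hgs] at hAnn
          have := fix_of_mem_range h2 comm jordan hgi hAnn.1
          show (h : A) * ((sInf T : {e : A // e * e = e}) : A) = h
          rw [comm]; exact this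
      refine ⟨completeLatticeOfInf _ ?_, fun e f => Iff.rfl⟩
      intro T
      constructor
      · intro f hf
        exact (key T (sInf T)).1 le_rfl f hf
      · intro b hb
        exact (key T b).2 hb
  · -- backward
    rintro ⟨RJ, L, hL⟩ S
    classical
    choose ε hεi hεs using RJ
    letI := L
    set T : Set {e : A // e * e = e} := {f | ∃ x ∈ S, f = ⟨ε x, hεi x⟩} with hT
    set g := sInf T with hg
    refine ⟨(g : A), g.2, ?_⟩
    ext a
    simp only [Set.mem_inter_iff, Set.mem_setOf_eq]
    constructor
    · rintro ⟨hann, hsq⟩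
      refine ⟨?_, hsq⟩
      have hfix : ∀ x ∈ S, (ε x) * a = a := by
        intro x hx
        have hmem : a ∈ Set.range (Uop (ε x)) ∩ sqSet A := by
          rw [← hεs x]; exact ⟨hann x hx, hsq⟩
        exact fix_of_mem_range h2 comm jordan (hεi x) hmem.1
      obtain ⟨p, hp, hpa, hmin⟩ := supp h2 comm jordan (fun x => ⟨ε x, hεi x, hεs x⟩) hsq
      have hpg : (⟨p, hp⟩ : {e : A // e * e = e}) ≤ g := by
        apply le_sInf
        rintro f ⟨x, hx, rfl⟩
        exact (hL _ _).2 (hmin (ε x) (hεi x) (hfix x hx))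
      have hga : (g : A) * a = a :=
        fix_trans h2 comm jordan hp ((hL _ _).1 hpg) hpa
      exact (mem_range_iff h2 comm jordan g.2 a).2 hga
    · rintro ⟨hrange, hsq⟩
      refine ⟨?_, hsq⟩
      intro x hx
      have hga : (g : A) * a = a := fix_of_mem_range h2 comm jordan g.2 hrange
      have hgε : (g : A) * (ε x) = g := by
        have hle : g ≤ (⟨ε x, hεi x⟩ : {e : A // e * e = e}) := sInf_le ⟨x, hx, rfl⟩
        exact (hL _ _).1 hle
      have hfix : (ε x) * a = a := fix_trans h2 comm jordan g.2 hgε hga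
      have hmem : a ∈ {b | Uop b x = 0} ∩ sqSet A := by
        rw [hεs x]
        exact ⟨(mem_range_iff h2 comm jordan (hεi x) a).2 hfix, hsq⟩
      exact hmem.1
end
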